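/- For any two Laplace distributions with common scale b > 0 and means m₁, m₂, the max-divergence (Rényi divergence of order ∞) satisfies d_∞(Laplace(m₁,b) ‖ Laplace(m₂,b)) = |m₁ − m₂| / b, i.e. sup over measurable sets S of log( P[Laplace(m₁,b) ∈ S] / P[Laplace(m₂,b) ∈ S] ) equals |m₁ − m₂|/b. -/

import Mathlib

/-!
The density of `Laplace(m₁, b)` is `exp ((|x - m₂| - |x - m₁|) / b)` times that of
`Laplace(m₂, b)`. By the triangle inequality this factor is at most `exp (|m₁ - m₂| / b)`,
which bounds every ratio `P₁(S) / P₂(S)`; the factor equals this bound on the half-line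
starting at `m₁` and pointing away from `m₂`, a set of positive mass where the ratio is
attained.
-/

open MeasureTheory Real Set

noncomputable def laplaceMeasure (m b : ℝ) : Measure ℝ :=
  MeasureTheory.volume.withDensity
    (fun x => ENNReal.ofReal ((1 / (2 * b)) * Real.exp (-|x - m| / b)))

namespace ENNReal

lemma log_toReal_div_le {a b : ℝ≥0∞} {c : ℝ} (hc : 0 ≤ c)
    (h : a ≤ ENNReal.ofReal (exp c) * b) :
    Real.log (a.toReal / b.toReal) ≤ c := by
  rcases (div_nonneg toReal_nonneg toReal_nonneg : 0 ≤ a.toReal / b.toReal).eq_or_lt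
    with hzero | hpos
  · rw [← hzero, Real.log_zero]
    exact hc
  have hb : 0 < b.toReal := toReal_nonneg.lt_of_ne fun h => by
    rw [← h, _root_.div_zero] at hpos
    exact hpos.false
  have hb_top : b ≠ ⊤ := (toReal_pos_iff.1 hb).2.ne
  have hreal : a.toReal ≤ exp c * b.toReal := by
    simpa [toReal_mul, toReal_ofReal (exp_pos c).le] using
      toReal_mono (mul_ne_top ofReal_ne_top hb_top) h
  rw [log_le_iff_le_exp hpos, div_le_iff₀ hb]
  exact hreal

lemma log_toReal_div_eq {a b : ℝ≥0∞} {c : ℝ} (h : a = ENNReal.ofReal (exp c) * b)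
    (hb_zero : b ≠ 0) (hb_top : b ≠ ⊤) : Real.log (a.toReal / b.toReal) = c := by
  rw [h, toReal_mul, toReal_ofReal (exp_pos c).le, mul_div_assoc,
    div_self (toReal_pos hb_zero hb_top).ne', mul_one, log_exp]

end ENNReal

lemma integrable_exp_neg_abs : Integrable fun x : ℝ => rexp (-|x|) := by
  refine (integrable_inv_one_add_sq.const_mul 2).mono' (by fun_prop) (ae_of_all _ fun x => ?_)
  have hexp : 1 + x ^ 2 ≤ rexp |x| * 2 := by
    have := quadratic_le_exp_of_nonneg (abs_nonneg x)
    rw [sq_abs] at this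
    linarith [abs_nonneg x]
  rw [norm_of_nonneg (exp_pos _).le, exp_neg, ← div_eq_mul_inv, le_div_iff₀ (by positivity),
    inv_mul_le_iff₀ (exp_pos _)]
  exact hexp

lemma integrable_exp_neg_abs_div {b : ℝ} (hb : 0 < b) :
    Integrable fun x : ℝ => rexp (-|x| / b) := by
  refine (integrable_exp_neg_abs.comp_div hb.ne').congr (ae_of_all _ fun x => ?_)
  simp only [abs_div, abs_of_pos hb, neg_div]

lemma laplace_density_eq_exp_mul (m₁ m₂ b x : ℝ) :
    1 / (2 * b) * rexp (-|x - m₁| / b)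
      = rexp ((|x - m₂| - |x - m₁|) / b) * (1 / (2 * b) * rexp (-|x - m₂| / b)) := by
  rw [mul_left_comm, ← exp_add]
  congr 2
  ring

lemma isFiniteMeasure_laplaceMeasure (m : ℝ) {b : ℝ} (hb : 0 < b) :
    IsFiniteMeasure (laplaceMeasure m b) :=
  isFiniteMeasure_withDensity_ofReal
    (((integrable_exp_neg_abs_div hb).comp_sub_right m).const_mul (1 / (2 * b))).2

lemma laplaceMeasure_eq_zero_iff (m : ℝ) {b : ℝ} (hb : 0 < b) (S : Set ℝ) :
    laplaceMeasure m b S = 0 ↔ volume S = 0 := by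
  rw [laplaceMeasure, withDensity_apply_eq_zero (by fun_prop)]
  have hpos : {x : ℝ | ENNReal.ofReal (1 / (2 * b) * rexp (-|x - m| / b)) ≠ 0} = univ :=
    eq_univ_of_forall fun x => by
      simp only [mem_ofPred_eq, ne_eq, ENNReal.ofReal_eq_zero, not_le]
      positivity
  rw [hpos, univ_inter]

lemma laplaceMeasure_le_smul {b : ℝ} (hb : 0 ≤ b) (m₁ m₂ : ℝ) :
    laplaceMeasure m₁ b
      ≤ ENNReal.ofReal (rexp (|m₁ - m₂| / b)) • laplaceMeasure m₂ b := by
  rw [laplaceMeasure, laplaceMeasure, ← withDensity_smul' _ _ ENNReal.ofReal_ne_top]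
  refine withDensity_mono (ae_of_all _ fun x => ?_)
  have htriangle : |x - m₂| - |x - m₁| ≤ |m₁ - m₂| := by
    simpa only [sub_sub_sub_cancel_left] using abs_sub_abs_le_abs_sub (x - m₂) (x - m₁)
  simp only [Pi.smul_apply, smul_eq_mul]
  rw [← ENNReal.ofReal_mul (exp_pos _).le, laplace_density_eq_exp_mul m₁ m₂]
  gcongr

lemma laplaceMeasure_apply_eq_mul_of_abs_sub_eq {m₁ m₂ b : ℝ} {S : Set ℝ}
    (hS : MeasurableSet S)
    (h : ∀ x ∈ S, |x - m₂| = |x - m₁| + |m₁ - m₂|) :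
    laplaceMeasure m₁ b S
      = ENNReal.ofReal (rexp (|m₁ - m₂| / b)) * laplaceMeasure m₂ b S := by
  rw [laplaceMeasure, laplaceMeasure, withDensity_apply _ hS, withDensity_apply _ hS,
    ← lintegral_const_mul' _ _ ENNReal.ofReal_ne_top]
  refine setLIntegral_congr_fun hS fun x hx => ?_
  rw [laplace_density_eq_exp_mul m₁ m₂, h x hx, add_sub_cancel_left,
    ENNReal.ofReal_mul (exp_pos _).le]

lemma exists_volume_ne_zero_abs_sub_eq_add (m₁ m₂ : ℝ) :
    ∃ S : Set ℝ, MeasurableSet S ∧ volume S ≠ 0 ∧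
      ∀ x ∈ S, |x - m₂| = |x - m₁| + |m₁ - m₂| := by
  rcases le_total m₁ m₂ with h | h
  · refine ⟨Iic m₁, measurableSet_Iic, by simp, fun x hx => ?_⟩
    have hx : x ≤ m₁ := hx
    rw [abs_of_nonpos (by linarith), abs_of_nonpos (by linarith), abs_of_nonpos (by linarith)]
    ring
  · refine ⟨Ici m₁, measurableSet_Ici, by simp, fun x hx => ?_⟩
    have hx : m₁ ≤ x := hx
    rw [abs_of_nonneg (by linarith), abs_of_nonneg (by linarith), abs_of_nonneg (by linarith)]
    ring

/-- Max-divergence (Rényi divergence of order ∞) between two Laplace distributions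
with common scale `b`: the supremum over measurable sets of
`log(P₁(S)/P₂(S))` equals `|m₁ - m₂|/b`, and it is attained. -/
theorem laplace_max_divergence (b m₁ m₂ : ℝ) (hb : 0 < b) :
    IsGreatest
      {x : ℝ | ∃ S : Set ℝ, MeasurableSet S ∧ laplaceMeasure m₂ b S ≠ 0 ∧
        x = Real.log ((laplaceMeasure m₁ b S).toReal / (laplaceMeasure m₂ b S).toReal)}
      (|m₁ - m₂| / b) := by
  constructor
  · obtain ⟨S, hS, hvol, htight⟩ := exists_volume_ne_zero_abs_sub_eq_add m₁ m₂
    have hS_zero : laplaceMeasure m₂ b S ≠ 0 :=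
      (laplaceMeasure_eq_zero_iff m₂ hb S).not.2 hvol
    have := isFiniteMeasure_laplaceMeasure m₂ hb
    exact ⟨S, hS, hS_zero, (ENNReal.log_toReal_div_eq
      (laplaceMeasure_apply_eq_mul_of_abs_sub_eq hS htight) hS_zero (measure_ne_top _ S)).symm⟩
  · rintro _ ⟨S, -, -, rfl⟩
    exact ENNReal.log_toReal_div_le (by positivity) (laplaceMeasure_le_smul hb.le m₁ m₂ S)
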